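/- arXiv:1701.02445 — 2 statements merged into one kernel-verified Lean document; each statement's English description precedes it below -/
import Mathlib

section
/- Let L be a complete residuated lattice, Y ≠ ∅, and K an ≤-filter in L (a nonempty upward-closed subset). An operator C : L^Y → L^Y is an L_K-closure operator if and only if C is extensive, isotone (A ⊆ B implies C(A) ⊆ C(B)), idempotent (C(C(A)) ⊆ C(A)), and satisfies C(a → C(A)) ⊆ a → C(A) for all a ∈ K and A ∈ L^Y. -/
/-!
Writing `S(A, B) = ⨅ y, A y → B y` for the degree of inclusion, adjointness and commutativity
give `s ≤ S(A, B) ↔ A ⊆ s → B`. Hence the graded monotonicity of `C` at a degree `s ∈ K` says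
exactly that `A ⊆ s → B` implies `C A ⊆ s → C B`. For `s = ⊤` this is plain monotonicity; for
`A = s → C B` and `B = C B` it is, using idempotence, the closedness of `s → C B` under `C`.
Conversely, from `A ⊆ s → B ⊆ s → C B` monotonicity and that closedness give `C A ⊆ s → C B`.
-/

section ResiduatedLattice

variable {L : Type*} [CompleteLattice L] {mul arr : L → L → L} {Y : Type*}
  {C : (Y → L) → (Y → L)} {K : Set L}

def subsethood (arr : L → L → L) (A B : Y → L) : L :=
  ⨅ y, arr (A y) (B y)

theorem monotone_arr (hadj : ∀ a b c : L, mul a b ≤ c ↔ b ≤ arr a c) (a : L) :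
    Monotone (arr a) := fun _ _ hbc =>
  (hadj _ _ _).mp (((hadj _ _ _).mpr le_rfl).trans hbc)

theorem le_arr_comm (hcomm : ∀ a b : L, mul a b = mul b a)
    (hadj : ∀ a b c : L, mul a b ≤ c ↔ b ≤ arr a c) {a b c : L} :
    b ≤ arr a c ↔ a ≤ arr b c := by
  rw [← hadj, ← hadj, hcomm]

theorem le_subsethood_iff (hcomm : ∀ a b : L, mul a b = mul b a)
    (hadj : ∀ a b c : L, mul a b ≤ c ↔ b ≤ arr a c) {s : L} {A B : Y → L} :
    s ≤ subsethood arr A B ↔ A ≤ fun y => arr s (B y) := by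
  simp only [subsethood, le_iInf_iff, Pi.le_def, le_arr_comm hcomm hadj]

theorem top_le_subsethood_iff (hcomm : ∀ a b : L, mul a b = mul b a)
    (hone : ∀ a : L, mul ⊤ a = a) (hadj : ∀ a b c : L, mul a b ≤ c ↔ b ≤ arr a c)
    {A B : Y → L} : ⊤ ≤ subsethood arr A B ↔ A ≤ B := by
  simp only [subsethood, le_iInf_iff, Pi.le_def, ← hadj, hcomm _ ⊤, hone]

theorem monotone_of_subsethood_le (hcomm : ∀ a b : L, mul a b = mul b a)
    (hone : ∀ a : L, mul ⊤ a = a) (hadj : ∀ a b c : L, mul a b ≤ c ↔ b ≤ arr a c)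
    (hK : IsUpperSet K) (htop : ⊤ ∈ K)
    (hC : ∀ A B, subsethood arr A B ∈ K → subsethood arr A B ≤ subsethood arr (C A) (C B)) :
    Monotone C := by
  intro A B hAB
  have hS : ⊤ ≤ subsethood arr A B := (top_le_subsethood_iff hcomm hone hadj).mpr hAB
  exact (top_le_subsethood_iff hcomm hone hadj).mp (hS.trans (hC A B (hK hS htop)))

theorem closure_arr_closure_le_of_subsethood_le (hcomm : ∀ a b : L, mul a b = mul b a)
    (hadj : ∀ a b c : L, mul a b ≤ c ↔ b ≤ arr a c) (hK : IsUpperSet K)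
    (hidem : ∀ A, C (C A) ≤ C A)
    (hC : ∀ A B, subsethood arr A B ∈ K → subsethood arr A B ≤ subsethood arr (C A) (C B))
    {a : L} (ha : a ∈ K) (A : Y → L) :
    C (fun y => arr a (C A y)) ≤ fun y => arr a (C A y) := by
  set B : Y → L := fun y => arr a (C A y)
  have hS : a ≤ subsethood arr B (C A) := (le_subsethood_iff hcomm hadj).mpr le_rfl
  have hCB : C B ≤ fun y => arr a (C (C A) y) :=
    (le_subsethood_iff hcomm hadj).mp (hS.trans (hC B (C A) (hK hS ha)))
  exact fun y => (hCB y).trans (monotone_arr hadj a (hidem A y))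

theorem le_subsethood_closure (hcomm : ∀ a b : L, mul a b = mul b a)
    (hadj : ∀ a b c : L, mul a b ≤ c ↔ b ≤ arr a c)
    (hext : ∀ A, A ≤ C A) (hmono : Monotone C) {s : L} {A B : Y → L}
    (hclosed : C (fun y => arr s (C B y)) ≤ fun y => arr s (C B y))
    (hs : s ≤ subsethood arr A B) :
    s ≤ subsethood arr (C A) (C B) := by
  have hA : A ≤ fun y => arr s (C B y) := fun y =>
    ((le_subsethood_iff hcomm hadj).mp hs y).trans (monotone_arr hadj s (hext B y))
  exact (le_subsethood_iff hcomm hadj).mpr ((hmono hA).trans hclosed)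

end ResiduatedLattice

theorem LK_closure_char_general {L : Type*} [CompleteLattice L]
    (mul arr : L → L → L)
    (hcomm : ∀ a b : L, mul a b = mul b a)
    (hone : ∀ a : L, mul ⊤ a = a)
    (hadj : ∀ a b c : L, mul a b ≤ c ↔ b ≤ arr a c)
    (K : Set L) (hKne : K.Nonempty)
    (hKup : ∀ a ∈ K, ∀ b : L, a ≤ b → b ∈ K)
    {Y : Type*} (C : (Y → L) → (Y → L)) :
    ((∀ A, A ≤ C A) ∧
     (∀ A B : Y → L, (⨅ y, arr (A y) (B y)) ∈ K →
       (⨅ y, arr (A y) (B y)) ≤ ⨅ y, arr (C A y) (C B y)) ∧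
     (∀ A, C (C A) ≤ C A)) ↔
    ((∀ A, A ≤ C A) ∧
     (∀ A B : Y → L, A ≤ B → C A ≤ C B) ∧
     (∀ A, C (C A) ≤ C A) ∧
     (∀ a ∈ K, ∀ A : Y → L,
       C (fun y => arr a (C A y)) ≤ fun y => arr a (C A y))) := by
  have hK : IsUpperSet K := fun a b hab ha => hKup a ha b hab
  have htop : ⊤ ∈ K := hK.top_mem.mpr hKne
  constructor
  · rintro ⟨hext, hC, hidem⟩
    exact ⟨hext, fun A B hAB => monotone_of_subsethood_le hcomm hone hadj hK htop hC hAB, hidem,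
      fun a ha => closure_arr_closure_le_of_subsethood_le hcomm hadj hK hidem hC ha⟩
  · rintro ⟨hext, hmono, hidem, hclosed⟩
    exact ⟨hext, fun A B hS =>
      le_subsethood_closure hcomm hadj hext (fun A B => hmono A B) (hclosed _ hS B) le_rfl, hidem⟩

/-- Characterization of L_K-closure operators for an ≤-filter K. -/
theorem LK_closure_char {L : Type*} [CompleteLattice L]
    (mul arr : L → L → L)
    (hassoc : ∀ a b c : L, mul (mul a b) c = mul a (mul b c))
    (hcomm : ∀ a b : L, mul a b = mul b a)
    (hone : ∀ a : L, mul ⊤ a = a)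
    (hadj : ∀ a b c : L, mul a b ≤ c ↔ b ≤ arr a c)
    (K : Set L) (hKne : K.Nonempty)
    (hKup : ∀ a ∈ K, ∀ b : L, a ≤ b → b ∈ K)
    {Y : Type*} [Nonempty Y] (C : (Y → L) → (Y → L)) :
    ((∀ A, A ≤ C A) ∧
     (∀ A B : Y → L, (⨅ y, arr (A y) (B y)) ∈ K →
       (⨅ y, arr (A y) (B y)) ≤ ⨅ y, arr (C A y) (C B y)) ∧
     (∀ A, C (C A) ≤ C A)) ↔
    ((∀ A, A ≤ C A) ∧
     (∀ A B : Y → L, A ≤ B → C A ≤ C B) ∧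
     (∀ A, C (C A) ≤ C A) ∧
     (∀ a ∈ K, ∀ A : Y → L,
       C (fun y => arr a (C A y)) ≤ fun y => arr a (C A y))) :=
  LK_closure_char_general mul arr hcomm hone hadj K hKne hKup C
end

section
/- Let L be a complete residuated lattice and * an idempotent truth-stressing hedge on L. Then the set S = {⟨x ↦ a*⊗x, x ↦ a*→x⟩ : a ∈ L}, ordered by pointwise comparison of lower adjoints, with composition ∘ of Galois connections as multiplication, least element the connection for a = 0 and greatest element the identity connection (a = 1), forms a complete commutative integral residuated lattice, with residuum given by ⟨a*⊗-, a*→-⟩ ⇝ ⟨b*⊗-, b*→-⟩ = ⋁{⟨c*⊗-, c*→-⟩ : c ∈ L, a*⊗c* ≤ b*}. -/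
/-!
A hedge `*` with the listed properties is an interior operator on `L` whose fixed points are
closed under `⊗`. Since `⟨a*⊗-, a*→-⟩` is determined by `a*`, and
`⟨a*⊗-, a*→-⟩ ⩽ ⟨b*⊗-, b*→-⟩ ↔ a* ≤ b*` (evaluate the lower adjoints at `1`),
the set `S` is a copy of the fixed points of `*` with `⊗` and the order of `L`.
Suprema in `S` are therefore suprema of parameters, and the residuum of `a` and `b` is the
connection with parameter `a* → b*`.
-/

/-- The isotone Galois connection ⟨a*⊗-, a*→-⟩ determined by `a`. -/
def hedgeConn {L : Type*} (mul arr : L → L → L) (star : L → L) (a : L) :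
    (L → L) × (L → L) :=
  (fun x => mul (star a) x, fun x => arr (star a) x)

/-- The set of connections induced by an idempotent hedge. -/
def hedgeS {L : Type*} (mul arr : L → L → L) (star : L → L) :
    Set ((L → L) × (L → L)) :=
  Set.range (hedgeConn mul arr star)

/-- Order of connections by pointwise comparison of lower adjoints. -/
def connLE {L : Type*} [CompleteLattice L]
    (p q : (L → L) × (L → L)) : Prop :=
  ∀ x : L, p.1 x ≤ q.1 x

/-- Composition of isotone Galois connections. -/
def connComp {L : Type*} (p q : (L → L) × (L → L)) : (L → L) × (L → L) :=
  (p.1 ∘ q.1, q.2 ∘ p.2)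

/-- `w` is the least upper bound of `T` inside `S'` w.r.t. `connLE`. -/
def connIsLUB {L : Type*} [CompleteLattice L]
    (S' T : Set ((L → L) × (L → L))) (w : (L → L) × (L → L)) : Prop :=
  w ∈ S' ∧ (∀ p ∈ T, connLE p w) ∧
    ∀ u ∈ S', (∀ p ∈ T, connLE p u) → connLE w u

section Residuated

variable {L : Type*} {mul arr : L → L → L}

lemma mul_arr_le [Preorder L] (hadj : ∀ a b c : L, mul a b ≤ c ↔ b ≤ arr a c) (u x : L) :
    mul u (arr u x) ≤ x :=
  (hadj u _ x).mpr le_rfl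

lemma mul_le_mul_right_of_le [Preorder L] (hadj : ∀ a b c : L, mul a b ≤ c ↔ b ≤ arr a c)
    (a : L) {x y : L} (h : x ≤ y) : mul a x ≤ mul a y :=
  (hadj a x _).mpr (h.trans ((hadj a y _).mp le_rfl))

lemma mul_le_mul_left_of_le [Preorder L] (hadj : ∀ a b c : L, mul a b ≤ c ↔ b ≤ arr a c)
    (hcomm : ∀ a b : L, mul a b = mul b a) {a b : L} (x : L) (h : a ≤ b) :
    mul a x ≤ mul b x := by
  rw [hcomm a x, hcomm b x]
  exact mul_le_mul_right_of_le hadj x h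

lemma arr_arr_eq_arr_mul [PartialOrder L]
    (hassoc : ∀ a b c : L, mul (mul a b) c = mul a (mul b c))
    (hadj : ∀ a b c : L, mul a b ≤ c ↔ b ≤ arr a c) (u v x : L) :
    arr v (arr u x) = arr (mul u v) x := by
  apply le_antisymm
  · refine (hadj (mul u v) _ x).mp ?_
    rw [hassoc]
    exact (mul_le_mul_right_of_le hadj u (mul_arr_le hadj v _)).trans (mul_arr_le hadj u x)
  · refine (hadj v _ _).mp ((hadj u _ _).mp ?_)
    rw [← hassoc]
    exact mul_arr_le hadj _ x

lemma mul_top_of_top_mul [LE L] [OrderTop L] (hcomm : ∀ a b : L, mul a b = mul b a)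
    (hone : ∀ a : L, mul ⊤ a = a) (a : L) : mul a ⊤ = a := by
  rw [hcomm, hone]

lemma top_arr [PartialOrder L] [OrderTop L] (hone : ∀ a : L, mul ⊤ a = a)
    (hadj : ∀ a b c : L, mul a b ≤ c ↔ b ≤ arr a c) (x : L) : arr ⊤ x = x := by
  refine le_antisymm ?_ ((hadj ⊤ x x).mp (hone x).le)
  simpa only [hone] using mul_arr_le hadj ⊤ x

lemma arr_eq_top_of_le [PartialOrder L] [OrderTop L] (hcomm : ∀ a b : L, mul a b = mul b a)
    (hone : ∀ a : L, mul ⊤ a = a) (hadj : ∀ a b c : L, mul a b ≤ c ↔ b ≤ arr a c)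
    {a b : L} (h : a ≤ b) : arr a b = ⊤ :=
  top_unique ((hadj a ⊤ b).mp ((mul_top_of_top_mul hcomm hone a).le.trans h))

end Residuated

section Hedge

variable {L : Type*} {mul arr : L → L → L} {star : L → L}

lemma star_monotone [PartialOrder L] [OrderTop L] (hcomm : ∀ a b : L, mul a b = mul b a)
    (hone : ∀ a : L, mul ⊤ a = a) (hadj : ∀ a b c : L, mul a b ≤ c ↔ b ≤ arr a c)
    (hs1 : star ⊤ = ⊤) (hs3 : ∀ a b : L, star (arr a b) ≤ arr (star a) (star b)) :
    Monotone star := by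
  intro a b h
  have htop : ⊤ ≤ arr (star a) (star b) := by
    simpa only [arr_eq_top_of_le hcomm hone hadj h, hs1] using hs3 a b
  simpa only [mul_top_of_top_mul hcomm hone] using (hadj _ ⊤ _).mpr htop

lemma star_le_star_iff_star_le [Preorder L] (hmono : Monotone star) (hs2 : ∀ a : L, star a ≤ a)
    (hs4 : ∀ a : L, star (star a) = star a) {c x : L} : star c ≤ star x ↔ star c ≤ x :=
  ⟨fun h => h.trans (hs2 x), fun h => hs4 c ▸ hmono h⟩

lemma star_mul_star_star [PartialOrder L] (hadj : ∀ a b c : L, mul a b ≤ c ↔ b ≤ arr a c)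
    (hs2 : ∀ a : L, star a ≤ a) (hs3 : ∀ a b : L, star (arr a b) ≤ arr (star a) (star b))
    (hs4 : ∀ a : L, star (star a) = star a) (hmono : Monotone star) (a b : L) :
    star (mul (star a) (star b)) = mul (star a) (star b) := by
  refine le_antisymm (hs2 _) ((hadj _ _ _).mpr ?_)
  have h : star b ≤ star (arr (star a) (mul (star a) (star b))) :=
    (star_le_star_iff_star_le hmono hs2 hs4).mpr ((hadj _ _ _).mp le_rfl)
  simpa only [hs4] using h.trans (hs3 _ _)

lemma hedgeConn_eq_of_star_eq {a b : L} (h : star a = star b) :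
    hedgeConn mul arr star a = hedgeConn mul arr star b := by
  simp only [hedgeConn, h]

end Hedge

section Connections

variable {L : Type*} [CompleteLattice L] {mul arr : L → L → L} {star : L → L}

lemma hedgeConn_fst_top (hcomm : ∀ a b : L, mul a b = mul b a) (hone : ∀ a : L, mul ⊤ a = a)
    (a : L) : (hedgeConn mul arr star a).1 ⊤ = star a :=
  mul_top_of_top_mul hcomm hone (star a)

lemma connLE_hedgeConn_iff (hcomm : ∀ a b : L, mul a b = mul b a)
    (hone : ∀ a : L, mul ⊤ a = a) (hadj : ∀ a b c : L, mul a b ≤ c ↔ b ≤ arr a c)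
    {a b : L} :
    connLE (hedgeConn mul arr star a) (hedgeConn mul arr star b) ↔ star a ≤ star b := by
  refine ⟨fun h => ?_, fun h x => mul_le_mul_left_of_le hadj hcomm x h⟩
  simpa only [hedgeConn_fst_top hcomm hone] using h ⊤

lemma hedgeConn_top (hone : ∀ a : L, mul ⊤ a = a)
    (hadj : ∀ a b c : L, mul a b ≤ c ↔ b ≤ arr a c) (hs1 : star ⊤ = ⊤) :
    hedgeConn mul arr star ⊤ = (id, id) := by
  simp only [hedgeConn, hs1, hone, top_arr hone hadj]
  rfl

lemma connComp_hedgeConn (hassoc : ∀ a b c : L, mul (mul a b) c = mul a (mul b c))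
    (hadj : ∀ a b c : L, mul a b ≤ c ↔ b ≤ arr a c) (hs2 : ∀ a : L, star a ≤ a)
    (hs3 : ∀ a b : L, star (arr a b) ≤ arr (star a) (star b))
    (hs4 : ∀ a : L, star (star a) = star a) (hmono : Monotone star) (a b : L) :
    connComp (hedgeConn mul arr star a) (hedgeConn mul arr star b) =
      hedgeConn mul arr star (mul (star a) (star b)) := by
  simp only [connComp, hedgeConn, Function.comp_def, star_mul_star_star hadj hs2 hs3 hs4 hmono,
    hassoc, arr_arr_eq_arr_mul hassoc hadj]

lemma connIsLUB_hedgeConn_iSup (hcomm : ∀ a b : L, mul a b = mul b a)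
    (hone : ∀ a : L, mul ⊤ a = a) (hadj : ∀ a b c : L, mul a b ≤ c ↔ b ≤ arr a c)
    (hs2 : ∀ a : L, star a ≤ a) (hs4 : ∀ a : L, star (star a) = star a)
    (hmono : Monotone star) {T : Set ((L → L) × (L → L))} (hT : T ⊆ hedgeS mul arr star) :
    connIsLUB (hedgeS mul arr star) T (hedgeConn mul arr star (⨆ p ∈ T, p.1 ⊤)) := by
  refine ⟨⟨_, rfl⟩, fun p hp => ?_, ?_⟩
  · obtain ⟨c, rfl⟩ := hT hp
    refine (connLE_hedgeConn_iff hcomm hone hadj).mpr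
      ((star_le_star_iff_star_le hmono hs2 hs4).mpr ?_)
    simpa only [hedgeConn_fst_top hcomm hone] using le_biSup (fun p => p.1 ⊤) hp
  · rintro _ ⟨d, rfl⟩ hub
    refine (connLE_hedgeConn_iff hcomm hone hadj).mpr ((hs2 _).trans (iSup₂_le fun p hp => ?_))
    obtain ⟨c, rfl⟩ := hT hp
    simpa only [hedgeConn_fst_top hcomm hone] using hub _ hp ⊤

lemma connIsLUB_hedgeConn_arr (hcomm : ∀ a b : L, mul a b = mul b a)
    (hone : ∀ a : L, mul ⊤ a = a) (hadj : ∀ a b c : L, mul a b ≤ c ↔ b ≤ arr a c)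
    (hs2 : ∀ a : L, star a ≤ a) (hs4 : ∀ a : L, star (star a) = star a)
    (hmono : Monotone star) (a b : L) :
    connIsLUB (hedgeS mul arr star)
      {r | ∃ c : L, r = hedgeConn mul arr star c ∧ mul (star a) (star c) ≤ star b}
      (hedgeConn mul arr star (arr (star a) (star b))) := by
  refine ⟨⟨_, rfl⟩, ?_, fun u _ hub => hub _ ⟨_, rfl, (hadj _ _ _).mpr (hs2 _)⟩⟩
  rintro _ ⟨c, rfl, hc⟩
  exact (connLE_hedgeConn_iff hcomm hone hadj).mpr
    ((star_le_star_iff_star_le hmono hs2 hs4).mpr ((hadj _ _ _).mp hc))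

lemma connLE_connComp_hedgeConn_iff (hassoc : ∀ a b c : L, mul (mul a b) c = mul a (mul b c))
    (hcomm : ∀ a b : L, mul a b = mul b a) (hone : ∀ a : L, mul ⊤ a = a)
    (hadj : ∀ a b c : L, mul a b ≤ c ↔ b ≤ arr a c) (hs2 : ∀ a : L, star a ≤ a)
    (hs3 : ∀ a b : L, star (arr a b) ≤ arr (star a) (star b))
    (hs4 : ∀ a : L, star (star a) = star a) (hmono : Monotone star) (a b d : L) :
    connLE (connComp (hedgeConn mul arr star a) (hedgeConn mul arr star d))
        (hedgeConn mul arr star b) ↔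
      connLE (hedgeConn mul arr star d) (hedgeConn mul arr star (arr (star a) (star b))) := by
  rw [connComp_hedgeConn hassoc hadj hs2 hs3 hs4 hmono, connLE_hedgeConn_iff hcomm hone hadj,
    connLE_hedgeConn_iff hcomm hone hadj, star_mul_star_star hadj hs2 hs3 hs4 hmono,
    star_le_star_iff_star_le hmono hs2 hs4, hadj]

end Connections

/-- For an idempotent truth-stressing hedge on a complete residuated lattice,
the set S = {⟨a*⊗-, a*→-⟩ : a ∈ L}, ordered by pointwise comparison of lower
adjoints, with composition as multiplication, the connection for 0 as least
element, the identity connection (a = 1) as greatest and neutral element, and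
with the residuum given by the indicated supremum, is a complete commutative
integral residuated lattice. -/
theorem hedge_params_residuated {L : Type*} [CompleteLattice L]
    (mul arr : L → L → L) (star : L → L)
    (hassoc : ∀ a b c : L, mul (mul a b) c = mul a (mul b c))
    (hcomm : ∀ a b : L, mul a b = mul b a)
    (hone : ∀ a : L, mul ⊤ a = a)
    (hadj : ∀ a b c : L, mul a b ≤ c ↔ b ≤ arr a c)
    (hs1 : star ⊤ = ⊤)
    (hs2 : ∀ a : L, star a ≤ a)
    (hs3 : ∀ a b : L, star (arr a b) ≤ arr (star a) (star b))
    (hs4 : ∀ a : L, star (star a) = star a) :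
    -- connLE is a partial order on S (reflexive, transitive, antisymmetric)
    (∀ p ∈ hedgeS mul arr star, connLE p p) ∧
    (∀ p ∈ hedgeS mul arr star, ∀ q ∈ hedgeS mul arr star,
      ∀ r ∈ hedgeS mul arr star, connLE p q → connLE q r → connLE p r) ∧
    (∀ p ∈ hedgeS mul arr star, ∀ q ∈ hedgeS mul arr star,
      connLE p q → connLE q p → p = q) ∧
    -- completeness: every subset of S has a least upper bound in S
    (∀ T ⊆ hedgeS mul arr star,
      ∃ w, connIsLUB (hedgeS mul arr star) T w) ∧
    -- S is closed under composition; composition is commutative and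
    -- associative on S
    (∀ p ∈ hedgeS mul arr star, ∀ q ∈ hedgeS mul arr star,
      connComp p q ∈ hedgeS mul arr star) ∧
    (∀ p ∈ hedgeS mul arr star, ∀ q ∈ hedgeS mul arr star,
      connComp p q = connComp q p) ∧
    (∀ p ∈ hedgeS mul arr star, ∀ q ∈ hedgeS mul arr star,
      ∀ r ∈ hedgeS mul arr star,
      connComp (connComp p q) r = connComp p (connComp q r)) ∧
    -- the connection for a = 1 is the identity connection, is neutral for
    -- composition, and is the greatest element (integrality)
    (hedgeConn mul arr star ⊤ = ((id : L → L), (id : L → L))) ∧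
    (∀ p ∈ hedgeS mul arr star, connComp (hedgeConn mul arr star ⊤) p = p) ∧
    (∀ p ∈ hedgeS mul arr star, connLE p (hedgeConn mul arr star ⊤)) ∧
    -- the connection for a = 0 is the least element
    (∀ p ∈ hedgeS mul arr star, connLE (hedgeConn mul arr star ⊥) p) ∧
    -- the residuum ⇝ : it is the supremum of the indicated set and satisfies
    -- the adjointness property with respect to composition
    (∀ a b : L, ∃ w,
      connIsLUB (hedgeS mul arr star)
        {r | ∃ c : L, r = hedgeConn mul arr star c ∧
          mul (star a) (star c) ≤ star b} w ∧
      ∀ r ∈ hedgeS mul arr star,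
        (connLE (connComp (hedgeConn mul arr star a) r)
            (hedgeConn mul arr star b) ↔ connLE r w)) := by
  have hmono := star_monotone hcomm hone hadj hs1 hs3
  have hcomp := connComp_hedgeConn hassoc hadj hs2 hs3 hs4 hmono
  have hle {a b : L} : connLE (hedgeConn mul arr star a) (hedgeConn mul arr star b) ↔
      star a ≤ star b := connLE_hedgeConn_iff hcomm hone hadj
  have htop := hedgeConn_top hone hadj hs1
  refine ⟨fun p _ x => le_rfl, fun p _ q _ r _ hpq hqr x => (hpq x).trans (hqr x), ?_,
    fun T hT => ⟨_, connIsLUB_hedgeConn_iSup hcomm hone hadj hs2 hs4 hmono hT⟩, ?_, ?_,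
    fun p _ q _ r _ => rfl, htop, fun p _ => by rw [htop]; rfl, ?_, ?_, fun a b => ⟨_,
    connIsLUB_hedgeConn_arr hcomm hone hadj hs2 hs4 hmono a b, ?_⟩⟩
  · rintro _ ⟨a, rfl⟩ _ ⟨b, rfl⟩ hab hba
    exact hedgeConn_eq_of_star_eq (le_antisymm (hle.mp hab) (hle.mp hba))
  · rintro _ ⟨a, rfl⟩ _ ⟨b, rfl⟩
    exact hcomp a b ▸ ⟨_, rfl⟩
  · rintro _ ⟨a, rfl⟩ _ ⟨b, rfl⟩
    rw [hcomp, hcomp, hcomm]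
  · rintro _ ⟨a, rfl⟩
    exact hle.mpr (le_top.trans_eq hs1.symm)
  · rintro _ ⟨a, rfl⟩
    exact hle.mpr (hmono bot_le)
  · rintro _ ⟨d, rfl⟩
    exact connLE_connComp_hedgeConn_iff hassoc hcomm hone hadj hs2 hs3 hs4 hmono a b d
end
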